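/- Let K ≥ 1 be an integer, κ > 1 a real number, and d > 0 a real number. For i = 1, …, K+2 set β_i := cos((i−1)π/(K+1)), λ_i := (κ−1)(β_i + 1)/2 + 1, and x₀ := 1 + 2/(κ−1). Then there exist nonnegative real numbers x_1, …, x_{K+2} and x'_1, …, x'_{K+2} such that: (1) ∑_{i=1}^{K+2} x_i λ_i^j = ∑_{i=1}^{K+2} x'_i λ_i^j for every integer 0 ≤ j ≤ K; (2) ∑_{i=1}^{K+2} x_i = ∑_{i=1}^{K+2} x'_i = d; and (3) ∑_{i=1}^{K+2} x_i/λ_i − ∑_{i=1}^{K+2} x'_i/λ_i ≥ 2d / (κ · (x₀ + √(x₀² − 1))^{K+1}). -/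

import Mathlib

/-- The rescaled Chebyshev extremal points `λ_i = (κ−1)(cos((i−1)π/(K+1)) + 1)/2 + 1`. -/
noncomputable def chebNode (K : ℕ) (κ : ℝ) (i : ℕ) : ℝ :=
  (κ - 1) * (Real.cos (((i : ℝ) - 1) * Real.pi / ((K : ℝ) + 1)) + 1) / 2 + 1

/-- `x₀ = 1 + 2/(κ−1)`. -/
noncomputable def chebX0 (κ : ℝ) : ℝ := 1 + 2 / (κ - 1)

open Polynomial Finset

section Aux

lemma cheb_step (p q : ℝ[X]) (n : ℕ) (a : ℝ) (hp : p.natDegree ≤ n+1) (hpc : p.coeff (n+1) = a)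
    (hq : q.natDegree ≤ n) : (2 * X * p - q).natDegree ≤ n+2 ∧ (2 * X * p - q).coeff (n+2) = 2*a := by
  have h2 : (2:ℝ[X]) = C 2 := (C_eq_natCast 2).symm
  have h2X : (2 * X * p : ℝ[X]) = Polynomial.C 2 * (X * p) := by rw [mul_assoc, h2]
  constructor
  · refine (natDegree_sub_le _ _).trans ?_
    simp only [sup_le_iff]
    refine ⟨?_, by omega⟩
    rw [h2X]
    refine (natDegree_C_mul_le _ _).trans (natDegree_mul_le.trans ?_)
    simp only [natDegree_X]; omega
  · rw [coeff_sub, h2X, coeff_C_mul, coeff_X_mul, hpc,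
      coeff_eq_zero_of_natDegree_lt (by omega)]
    ring

lemma cheb_coeffs : ∀ n : ℕ,
    ((Chebyshev.T ℝ (n+1)).natDegree ≤ n+1 ∧ (Chebyshev.T ℝ (n+1)).coeff (n+1) = 2^n) ∧
    ((Chebyshev.U ℝ n).natDegree ≤ n ∧ (Chebyshev.U ℝ n).coeff n = 2^n) := by
  intro n
  induction n using Nat.strong_induction_on with
  | _ n ih =>
    match n with
    | 0 => constructor <;> constructor <;> simp [Chebyshev.T_one, Chebyshev.U_zero]
    | 1 =>
      have h2 : (2:ℝ[X]) = C 2 := (C_eq_natCast 2).symm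
      have hT2 : Chebyshev.T ℝ ((1:ℕ)+1) = 2 * X * X - 1 := by
        have := Chebyshev.T_add_two ℝ 0
        norm_num at this ⊢
        rw [this]
      have hstep := cheb_step X 1 0 1 (by simp) (by simp) (by simp)
      have hU1 : Chebyshev.U ℝ ((1:ℕ):ℤ) = C 2 * X := by
        norm_num [Chebyshev.U_one]; rw [h2]
      refine ⟨⟨?_, ?_⟩, ?_, ?_⟩
      · rw [hT2]; exact hstep.1
      · rw [hT2]; rw [hstep.2]; norm_num
      · rw [hU1]; exact (natDegree_C_mul_le _ _).trans natDegree_X.le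
      · rw [hU1, coeff_C_mul, coeff_X_one]; norm_num
    | (m+2) =>
      have hm1 := ih (m+1) (by omega)
      have hm := ih m (by omega)
      push_cast at hm1 hm
      have eT : ((m+2:ℕ):ℤ) + 1 = ((m:ℤ)+1) + 2 := by push_cast; ring
      have eU : ((m+2:ℕ):ℤ) = ((m:ℤ)) + 2 := by push_cast; ring
      have hTrec : Chebyshev.T ℝ ((m+2:ℕ)+1)
          = 2 * X * Chebyshev.T ℝ ((m:ℤ)+1+1) - Chebyshev.T ℝ ((m:ℤ)+1) := by
        rw [eT, Chebyshev.T_add_two]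
      have hUrec : Chebyshev.U ℝ ((m+2:ℕ))
          = 2 * X * Chebyshev.U ℝ ((m:ℤ)+1) - Chebyshev.U ℝ ((m:ℤ)) := by
        rw [eU, Chebyshev.U_add_two]
      have e3 : m+2+1 = m+1+2 := by omega
      constructor
      · rw [hTrec, e3]
        have := cheb_step _ (Chebyshev.T ℝ ((m:ℤ)+1)) (m+1) (2^(m+1)) hm1.1.1 hm1.1.2
          (hm.1.1.trans (by omega))
        exact ⟨this.1, by rw [this.2]; ring⟩
      · rw [hUrec]
        have := cheb_step _ (Chebyshev.U ℝ ((m:ℤ))) m (2^(m+1)) hm1.2.1 hm1.2.2 hm.2.1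
        exact ⟨this.1, by rw [this.2]; ring⟩

lemma leadingCoeff_lagrange_basis (s : Finset ℕ) (v : ℕ → ℝ) (hvs : Set.InjOn v s) {i : ℕ}
    (hi : i ∈ s) : (Lagrange.basis s v i).coeff (s.card - 1) = (∏ k ∈ s.erase i, (v i - v k))⁻¹ := by
  have hdeg := Lagrange.natDegree_basis hvs hi
  rw [← hdeg, coeff_natDegree]
  unfold Lagrange.basis
  rw [leadingCoeff_prod, ← Finset.prod_inv_distrib]
  apply Finset.prod_congr rfl
  intro k hk
  have hne : v i ≠ v k := fun h =>
    (Finset.mem_erase.mp hk).1 ((hvs hi (Finset.mem_erase.mp hk).2 h).symm)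
  rw [Lagrange.basisDivisor, leadingCoeff_mul, leadingCoeff_C,
    (monic_X_sub_C (v k)).leadingCoeff, mul_one]

lemma lagrange_key (s : Finset ℕ) (v : ℕ → ℝ) (hvs : Set.InjOn v s) (p : ℝ[X])
    (hp : p.degree < s.card) :
    ∑ i ∈ s, (∏ k ∈ s.erase i, (v i - v k))⁻¹ * p.eval (v i) = p.coeff (s.card - 1) := by
  have hinterp := Lagrange.eq_interpolate hvs hp
  conv_rhs => rw [hinterp]
  rw [Lagrange.interpolate_apply, finset_sum_coeff]
  apply Finset.sum_congr rfl
  intro i hi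
  rw [coeff_C_mul, leadingCoeff_lagrange_basis s v hvs hi]
  ring

lemma u_eval_formula (t : ℝ) (ht : 1 < t) : ∀ n : ℕ,
    (Chebyshev.U ℝ n).eval ((t + t⁻¹)/2) * (t - t⁻¹) = t^(n+1) - (t⁻¹)^(n+1) := by
  have ht0 : t ≠ 0 := by positivity
  intro n
  induction n using Nat.strong_induction_on with
  | _ n ih =>
    match n with
    | 0 => simp [Chebyshev.U_zero]
    | 1 =>
      show (Chebyshev.U ℝ (1:ℤ)).eval ((t + t⁻¹)/2) * (t - t⁻¹) = t^2 - (t⁻¹)^2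
      rw [Chebyshev.U_one]
      simp only [eval_mul, eval_ofNat, eval_X]
      ring
    | (m+2) =>
      have hm1 := ih (m+1) (by omega)
      have hm := ih m (by omega)
      have eU : ((m+2:ℕ):ℤ) = ((m:ℤ)) + 2 := by push_cast; ring
      have e1 : ((m:ℤ)+1) = (((m+1:ℕ)):ℤ) := by push_cast; ring
      rw [eU, Chebyshev.U_add_two, e1]
      simp only [eval_sub, eval_mul, eval_ofNat, eval_X]
      have expand : (2 * ((t + t⁻¹)/2) * (Chebyshev.U ℝ ((m+1:ℕ):ℤ)).eval ((t + t⁻¹)/2)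
          - (Chebyshev.U ℝ ((m:ℕ):ℤ)).eval ((t + t⁻¹)/2)) * (t - t⁻¹)
          = (t + t⁻¹) * ((Chebyshev.U ℝ ((m+1:ℕ):ℤ)).eval ((t + t⁻¹)/2) * (t - t⁻¹))
            - ((Chebyshev.U ℝ ((m:ℕ):ℤ)).eval ((t + t⁻¹)/2) * (t - t⁻¹)) := by ring
      rw [expand, hm1, hm]
      have A : t⁻¹ * t = 1 := inv_mul_cancel₀ ht0
      linear_combination (t^(m+1) - t⁻¹^(m+1)) * A

end Aux

section Nodes
variable (K : ℕ) (κ : ℝ)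

lemma theta_mem (hK : 1 ≤ K) {i : ℕ} (hi : i ∈ Finset.Icc 1 (K+2)) :
    ((i:ℝ) - 1) * Real.pi / ((K:ℝ) + 1) ∈ Set.Icc 0 Real.pi := by
  simp only [Finset.mem_Icc] at hi
  have hπ := Real.pi_pos
  constructor
  · apply div_nonneg (mul_nonneg _ hπ.le) (by positivity)
    have : (1:ℝ) ≤ (i:ℝ) := by exact_mod_cast hi.1
    linarith
  · rw [div_le_iff₀ (by positivity)]
    have : (i:ℝ) ≤ (K:ℝ) + 2 := by exact_mod_cast hi.2
    nlinarith

lemma node_anti (hK : 1 ≤ K) (hκ : 1 < κ) {i j : ℕ} (hi : i ∈ Finset.Icc 1 (K+2))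
    (hj : j ∈ Finset.Icc 1 (K+2)) (hij : i < j) : chebNode K κ j < chebNode K κ i := by
  have hcos := Real.strictAntiOn_cos (theta_mem K hK hi) (theta_mem K hK hj) ?_
  · unfold chebNode
    have : κ - 1 > 0 := by linarith
    nlinarith [hcos]
  · have hπ := Real.pi_pos
    have h1 : (i:ℝ) < (j:ℝ) := by exact_mod_cast hij
    have h2 : (i:ℝ) - 1 < (j:ℝ) - 1 := by linarith
    have h0 : (0:ℝ) ≤ (i:ℝ) - 1 := by
      have := Finset.mem_Icc.mp hi |>.1
      have : (1:ℝ) ≤ (i:ℝ) := by exact_mod_cast this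
      linarith
    gcongr

lemma node_ge_one (hκ : 1 < κ) (i : ℕ) : 1 ≤ chebNode K κ i := by
  unfold chebNode
  have := Real.neg_one_le_cos (((i:ℝ) - 1) * Real.pi / ((K:ℝ) + 1))
  nlinarith

lemma node_injOn (hK : 1 ≤ K) (hκ : 1 < κ) :
    Set.InjOn (chebNode K κ) (Finset.Icc 1 (K+2)) := by
  intro i hi j hj hij
  simp only [Finset.coe_Icc, Set.mem_Icc] at hi hj
  by_contra hne
  rcases Nat.lt_or_ge i j with h | h
  · exact absurd hij (node_anti K κ hK hκ (by simp [Finset.mem_Icc]; omega)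
      (by simp [Finset.mem_Icc]; omega) h).ne'
  · have : j < i := by omega
    exact absurd hij (node_anti K κ hK hκ (by simp [Finset.mem_Icc]; omega)
      (by simp [Finset.mem_Icc]; omega) this).ne

lemma node_one (hκ : 1 < κ) : chebNode K κ 1 = κ := by
  unfold chebNode; norm_num

lemma node_last (hκ : 1 < κ) : chebNode K κ (K+2) = 1 := by
  unfold chebNode
  have h1 : ((K+2:ℕ):ℝ) - 1 = (K:ℝ) + 1 := by push_cast; ring
  rw [h1]
  have h2 : ((K:ℝ)+1) * Real.pi / ((K:ℝ)+1) = Real.pi := by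
    field_simp
  rw [h2, Real.cos_pi]
  ring

lemma weight_sign (hK : 1 ≤ K) (hκ : 1 < κ) {i : ℕ} (hi : i ∈ Finset.Icc 1 (K+2)) :
    0 < (-1:ℝ)^(i-1) * ∏ k ∈ (Finset.Icc 1 (K+2)).erase i, (chebNode K κ i - chebNode K κ k) := by
  have hsplit : (Finset.Icc 1 (K+2)).erase i = (Finset.Icc 1 (i-1)) ∪ (Finset.Icc (i+1) (K+2)) := by
    have hiIcc := Finset.mem_Icc.mp hi
    ext k; simp only [Finset.mem_erase, Finset.mem_Icc, Finset.mem_union]; omega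
  have hdisj : Disjoint (Finset.Icc 1 (i-1)) (Finset.Icc (i+1) (K+2)) := by
    rw [Finset.disjoint_left]; intro k hk hk'
    simp only [Finset.mem_Icc] at hk hk'; omega
  rw [hsplit, Finset.prod_union hdisj]
  have hAcard : (Finset.Icc 1 (i-1)).card = i - 1 := by rw [Nat.card_Icc]; omega
  have hA : ∏ k ∈ Finset.Icc 1 (i-1), (chebNode K κ i - chebNode K κ k)
      = (-1:ℝ)^(i-1) * ∏ k ∈ Finset.Icc 1 (i-1), (chebNode K κ k - chebNode K κ i) := by
    calc ∏ k ∈ Finset.Icc 1 (i-1), (chebNode K κ i - chebNode K κ k)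
        = ∏ k ∈ Finset.Icc 1 (i-1), ((-1:ℝ) * (chebNode K κ k - chebNode K κ i)) :=
          Finset.prod_congr rfl (by intros; ring)
      _ = (∏ _k ∈ Finset.Icc 1 (i-1), (-1:ℝ))
            * ∏ k ∈ Finset.Icc 1 (i-1), (chebNode K κ k - chebNode K κ i) :=
          Finset.prod_mul_distrib
      _ = (-1:ℝ)^(i-1) * ∏ k ∈ Finset.Icc 1 (i-1), (chebNode K κ k - chebNode K κ i) := by
          rw [Finset.prod_const, hAcard]
  rw [hA]
  have hiIcc := Finset.mem_Icc.mp hi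
  have h1 : (0:ℝ) < ∏ k ∈ Finset.Icc 1 (i-1), (chebNode K κ k - chebNode K κ i) := by
    apply Finset.prod_pos; intro k hk
    simp only [Finset.mem_Icc] at hk
    have := node_anti K κ hK hκ (i := k) (j := i)
      (by simp only [Finset.mem_Icc]; omega) hi (by omega)
    linarith
  have h2 : (0:ℝ) < ∏ k ∈ Finset.Icc (i+1) (K+2), (chebNode K κ i - chebNode K κ k) := by
    apply Finset.prod_pos; intro k hk
    simp only [Finset.mem_Icc] at hk
    have := node_anti K κ hK hκ (i := i) (j := k) hi
      (by simp only [Finset.mem_Icc]; omega) (by omega)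
    linarith
  have hsq : (-1:ℝ)^(i-1) * ((-1:ℝ)^(i-1)
        * (∏ k ∈ Finset.Icc 1 (i-1), (chebNode K κ k - chebNode K κ i))
        * (∏ k ∈ Finset.Icc (i+1) (K+2), (chebNode K κ i - chebNode K κ k)))
      = ((-1:ℝ)^(i-1))^2 * ((∏ k ∈ Finset.Icc 1 (i-1), (chebNode K κ k - chebNode K κ i))
        * (∏ k ∈ Finset.Icc (i+1) (K+2), (chebNode K κ i - chebNode K κ k))) := by ring
  rw [hsq, ← pow_mul, mul_comm (i-1) 2, pow_mul, neg_one_sq, one_pow, one_mul]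
  exact mul_pos h1 h2

lemma cosnode_injOn (hK : 1 ≤ K) : Set.InjOn
    (fun j : ℕ => Real.cos ((j:ℝ) * Real.pi / ((K:ℝ)+1))) (Finset.Icc 1 K) := by
  have hπ := Real.pi_pos
  have hmem : ∀ j ∈ Finset.Icc 1 K, (j:ℝ) * Real.pi / ((K:ℝ)+1) ∈ Set.Icc 0 Real.pi := by
    intro j hj
    simp only [Finset.mem_Icc] at hj
    have hj1 : (1:ℝ) ≤ (j:ℝ) := by exact_mod_cast hj.1
    have hjK : (j:ℝ) ≤ (K:ℝ) := by exact_mod_cast hj.2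
    constructor
    · positivity
    · rw [div_le_iff₀ (by positivity)]; nlinarith
  intro a ha b hb hab
  simp only [Finset.coe_Icc, Set.mem_Icc] at ha hb
  by_contra hne
  have key : ∀ a b : ℕ, a ∈ Finset.Icc 1 K → b ∈ Finset.Icc 1 K → a < b →
      Real.cos ((b:ℝ) * Real.pi / ((K:ℝ)+1)) < Real.cos ((a:ℝ) * Real.pi / ((K:ℝ)+1)) := by
    intro a b ha hb hlt
    apply Real.strictAntiOn_cos (hmem a ha) (hmem b hb)
    have : (a:ℝ) < (b:ℝ) := by exact_mod_cast hlt
    gcongr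
  rcases Nat.lt_or_ge a b with h | h
  · exact absurd hab (key a b (by simp [Finset.mem_Icc]; omega) (by simp [Finset.mem_Icc]; omega) h).ne'
  · have : b < a := by omega
    exact absurd hab (key b a (by simp [Finset.mem_Icc]; omega) (by simp [Finset.mem_Icc]; omega) this).ne

lemma U_fact (hK : 1 ≤ K) (x : ℝ) : (Chebyshev.U ℝ (K:ℤ)).eval x
    = 2^K * ∏ j ∈ Finset.Icc 1 K, (x - Real.cos ((j:ℝ) * Real.pi / ((K:ℝ)+1))) := by
  have hπ := Real.pi_pos
  set r : ℕ → ℝ := fun j => Real.cos ((j:ℝ) * Real.pi / ((K:ℝ)+1)) with hr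
  have hcard : (Finset.Icc 1 K).card = K := by rw [Nat.card_Icc]; omega
  have hUd := (cheb_coeffs K).2
  have hnodal_deg : (Lagrange.nodal (Finset.Icc 1 K) r).natDegree = K := by
    rw [Lagrange.natDegree_nodal, hcard]
  have hg : Chebyshev.U ℝ (K:ℤ) - C ((2:ℝ)^K) * Lagrange.nodal (Finset.Icc 1 K) r = 0 := by
    apply Polynomial.eq_zero_of_degree_lt_of_eval_index_eq_zero (v := r) (Finset.Icc 1 K)
      (cosnode_injOn K hK)
    · rw [hcard, Polynomial.degree_lt_iff_coeff_zero]
      intro m hm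
      rw [coeff_sub, coeff_C_mul]
      rcases eq_or_lt_of_le hm with he | hlt
      · have hcn : (Lagrange.nodal (Finset.Icc 1 K) r).coeff K = 1 := by
          have hmc : (Lagrange.nodal (Finset.Icc 1 K) r).coeff
              ((Lagrange.nodal (Finset.Icc 1 K) r).natDegree) = 1 :=
            Monic.coeff_natDegree Lagrange.nodal_monic
          rwa [hnodal_deg] at hmc
        rw [← he, hUd.2, hcn]
        ring
      · rw [coeff_eq_zero_of_natDegree_lt (lt_of_le_of_lt hUd.1 hlt),
          coeff_eq_zero_of_natDegree_lt (by rw [hnodal_deg]; exact hlt)]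
        ring
    · intro j hj
      simp only [Finset.mem_Icc] at hj
      have hθ1 : 0 < (j:ℝ) * Real.pi / ((K:ℝ)+1) := by
        have : (1:ℝ) ≤ (j:ℝ) := by exact_mod_cast hj.1
        positivity
      have hθ2 : (j:ℝ) * Real.pi / ((K:ℝ)+1) < Real.pi := by
        rw [div_lt_iff₀ (by positivity)]
        have h1 : (j:ℝ) ≤ (K:ℝ) := by exact_mod_cast hj.2
        nlinarith
      have hsin : 0 < Real.sin ((j:ℝ) * Real.pi / ((K:ℝ)+1)) :=
        Real.sin_pos_of_pos_of_lt_pi hθ1 hθ2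
      have hUcos := Polynomial.Chebyshev.U_real_cos ((j:ℝ) * Real.pi / ((K:ℝ)+1)) (K:ℤ)
      have harg : (((K:ℤ):ℝ) + 1) * ((j:ℝ) * Real.pi / ((K:ℝ)+1)) = (j:ℝ) * Real.pi := by
        push_cast; field_simp
      rw [harg, Real.sin_nat_mul_pi] at hUcos
      have hUzero : (Chebyshev.U ℝ (K:ℤ)).eval (r j) = 0 := by
        have := mul_eq_zero.mp hUcos
        rcases this with h | h
        · exact h
        · exact absurd h hsin.ne'
      simp only [eval_sub, eval_mul, eval_C, hUzero,
        Lagrange.eval_nodal_at_node (Finset.mem_Icc.mpr hj)]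
      ring
  have := sub_eq_zero.mp hg
  rw [this]
  simp [Lagrange.eval_nodal, hr]

set_option maxHeartbeats 1600000 in
lemma prod_bound (hK : 1 ≤ K) (hκ : 1 < κ) :
    2^K * (2/(κ-1))^(K+1) * ∏ i ∈ Finset.Icc 1 (K+2), chebNode K κ i
      ≤ κ * (chebX0 κ + Real.sqrt ((chebX0 κ)^2 - 1))^(K+1) := by
  have hκ0 : (0:ℝ) < κ - 1 := by linarith
  set x0 : ℝ := chebX0 κ with hx0def
  have hx0 : 1 < x0 := by
    rw [hx0def]; unfold chebX0; have : 0 < 2/(κ-1) := by positivity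
    linarith
  set sq : ℝ := Real.sqrt (x0^2 - 1) with hsqdef
  have hs2 : sq^2 = x0^2 - 1 := Real.sq_sqrt (by nlinarith)
  have hsq0 : 0 < sq := Real.sqrt_pos.mpr (by nlinarith)
  have hsge : 2/(κ-1) ≤ sq := by
    have hx0e : x0 = 1 + 2/(κ-1) := by rw [hx0def]; rfl
    have h1 : (2/(κ-1))^2 ≤ sq^2 := by
      rw [hs2, hx0e]
      have h2 : (0:ℝ) < 2/(κ-1) := by positivity
      nlinarith
    nlinarith [sq_nonneg (sq - 2/(κ-1))]
  set t : ℝ := x0 + sq with htdef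
  have ht : 1 < t := by rw [htdef]; linarith
  have ht0 : (0:ℝ) < t := by linarith
  have htinv : t⁻¹ = x0 - sq := by
    apply inv_eq_of_mul_eq_one_right
    rw [htdef]; linear_combination -hs2
  have hmid : (t + t⁻¹)/2 = x0 := by rw [htinv, htdef]; ring
  have hdiff : t - t⁻¹ = 2*sq := by rw [htinv, htdef]; ring
  have hU := u_eval_formula t ht K
  rw [hmid, hdiff] at hU
  -- product decomposition
  have e : Finset.Icc 1 (K+2) = insert 1 (insert (K+2) (Finset.Icc 2 (K+1))) := by
    ext k; simp only [Finset.mem_insert, Finset.mem_Icc]; omega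
  have h1mem : (1:ℕ) ∉ insert (K+2) (Finset.Icc 2 (K+1)) := by
    simp only [Finset.mem_insert, Finset.mem_Icc]; omega
  have h2mem : K+2 ∉ Finset.Icc 2 (K+1) := by simp only [Finset.mem_Icc]; omega
  have hdecomp : ∏ i ∈ Finset.Icc 1 (K+2), chebNode K κ i
      = κ * ∏ i ∈ Finset.Icc 2 (K+1), chebNode K κ i := by
    rw [e, Finset.prod_insert h1mem, Finset.prod_insert h2mem, node_one K κ hκ,
      node_last K κ hκ]
    ring
  have hmiddle : ∏ i ∈ Finset.Icc 2 (K+1), chebNode K κ i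
      = ∏ j ∈ Finset.Icc 1 K, ((κ-1)/2 * (x0 + Real.cos ((j:ℝ) * Real.pi / ((K:ℝ)+1)))) := by
    apply Finset.prod_nbij' (fun i => i - 1) (fun j => j + 1)
    · intro a ha; simp only [Finset.mem_Icc] at ha ⊢; omega
    · intro a ha; simp only [Finset.mem_Icc] at ha ⊢; omega
    · intro a ha; simp only [Finset.mem_Icc] at ha; omega
    · intro a ha; simp only [Finset.mem_Icc] at ha; omega
    · intro a ha
      simp only [Finset.mem_Icc] at ha
      unfold chebNode
      have hcast : ((a:ℝ) - 1) = (((a-1:ℕ)):ℝ) := by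
        have : (1:ℕ) ≤ a := by omega
        push_cast [Nat.cast_sub this]; ring
      rw [hcast]
      rw [hx0def]; unfold chebX0
      field_simp
      ring
  have hreflect : ∏ j ∈ Finset.Icc 1 K, (x0 + Real.cos ((j:ℝ) * Real.pi / ((K:ℝ)+1)))
      = ∏ j ∈ Finset.Icc 1 K, (x0 - Real.cos ((j:ℝ) * Real.pi / ((K:ℝ)+1))) := by
    apply Finset.prod_nbij' (fun j => K + 1 - j) (fun j => K + 1 - j)
    · intro a ha; simp only [Finset.mem_Icc] at ha ⊢; omega
    · intro a ha; simp only [Finset.mem_Icc] at ha ⊢; omega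
    · intro a ha; simp only [Finset.mem_Icc] at ha; omega
    · intro a ha; simp only [Finset.mem_Icc] at ha; omega
    · intro a ha
      simp only [Finset.mem_Icc] at ha
      have hcast : (((K + 1 - a : ℕ)):ℝ) = (K:ℝ) + 1 - (a:ℝ) := by
        have : a ≤ K + 1 := by omega
        push_cast [Nat.cast_sub this]; ring
      rw [hcast]
      have harg : ((K:ℝ) + 1 - (a:ℝ)) * Real.pi / ((K:ℝ)+1)
          = Real.pi - (a:ℝ) * Real.pi / ((K:ℝ)+1) := by
        field_simp
      rw [harg, Real.cos_pi_sub]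
      ring
  have hfact := U_fact K hK x0
  -- combine
  have hQpos : (0:ℝ) < ∏ j ∈ Finset.Icc 1 K, (x0 - Real.cos ((j:ℝ) * Real.pi / ((K:ℝ)+1))) := by
    apply Finset.prod_pos; intro j hj
    have hc1 := Real.cos_le_one ((j:ℝ) * Real.pi / ((K:ℝ)+1))
    linarith
  set Q : ℝ := ∏ j ∈ Finset.Icc 1 K, (x0 - Real.cos ((j:ℝ) * Real.pi / ((K:ℝ)+1))) with hQ
  have hKcard : (Finset.Icc 1 K).card = K := by rw [Nat.card_Icc]; omega
  have hconst : ∏ j ∈ Finset.Icc 1 K, ((κ-1)/2 * (x0 + Real.cos ((j:ℝ) * Real.pi / ((K:ℝ)+1))))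
      = ((κ-1)/2)^K * Q := by
    rw [Finset.prod_mul_distrib, Finset.prod_const, hKcard, hreflect]
  -- now the estimate
  have hUx0 : (2:ℝ)^K * Q * (2*sq) = t^(K+1) - (t⁻¹)^(K+1) := by
    rw [← hfact]; exact hU
  have htau : (0:ℝ) < (t⁻¹)^(K+1) := by positivity
  have hT : (0:ℝ) < t^(K+1) := by positivity
  rw [hdecomp, hmiddle, hconst]
  have hcancel : (2:ℝ)^K * (2/(κ-1))^(K+1) * (κ * (((κ-1)/2)^K * Q))
      = κ * (2/(κ-1)) * (2^K * Q) := by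
    have hone : ((2:ℝ)/(κ-1))^K * ((κ-1)/2)^K = 1 := by
      rw [← mul_pow]
      have : (2:ℝ)/(κ-1) * ((κ-1)/2) = 1 := by field_simp
      rw [this, one_pow]
    rw [pow_succ]
    linear_combination ((2:ℝ)^K * (2/(κ-1)) * κ * Q) * hone
  rw [hcancel]
  have hApos : (0:ℝ) < 2^K * Q := mul_pos (by positivity) hQpos
  have h2KQ : 2^K * Q * (2*sq) ≤ t^(K+1) := by nlinarith [htau, hUx0]
  have hκpos : (0:ℝ) < κ := by linarith
  have step1 : (2/(κ-1)) * (2^K*Q) ≤ sq * (2^K*Q) := mul_le_mul_of_nonneg_right hsge hApos.le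
  have step2 : sq * (2^K*Q) ≤ t^(K+1) := by nlinarith [h2KQ, mul_pos hsq0 hApos]
  have final := mul_le_mul_of_nonneg_left (step1.trans step2) hκpos.le
  nlinarith [final]

end Nodes

/-- There exist nonnegative `x_i, x'_i`, `i = 1, …, K+2`, matching in the
moments `∑ x_i λ_i^j = ∑ x'_i λ_i^j` for `0 ≤ j ≤ K`, with total mass `d` each, and with
`∑ x_i/λ_i − ∑ x'_i/λ_i ≥ 2d / (κ (x₀ + √(x₀² − 1))^{K+1})`. -/
theorem stmt_12 (K : ℕ) (hK : 1 ≤ K) (κ : ℝ) (hκ : 1 < κ) (d : ℝ) (hd : 0 < d) :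
    ∃ x x' : ℕ → ℝ,
      (∀ i ∈ Finset.Icc 1 (K + 2), 0 ≤ x i ∧ 0 ≤ x' i) ∧
      (∀ j : ℕ, j ≤ K →
        ∑ i ∈ Finset.Icc 1 (K + 2), x i * (chebNode K κ i) ^ j =
          ∑ i ∈ Finset.Icc 1 (K + 2), x' i * (chebNode K κ i) ^ j) ∧
      (∑ i ∈ Finset.Icc 1 (K + 2), x i = d) ∧
      (∑ i ∈ Finset.Icc 1 (K + 2), x' i = d) ∧
      2 * d / (κ * (chebX0 κ + Real.sqrt ((chebX0 κ) ^ 2 - 1)) ^ (K + 1)) ≤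
        (∑ i ∈ Finset.Icc 1 (K + 2), x i / chebNode K κ i) -
          ∑ i ∈ Finset.Icc 1 (K + 2), x' i / chebNode K κ i := by
  classical
  have hκ0 : (0:ℝ) < κ - 1 := by linarith
  set sI : Finset ℕ := Finset.Icc 1 (K+2) with hsI
  have hcard : sI.card = K + 2 := by rw [hsI, Nat.card_Icc]; omega
  have hinj : Set.InjOn (chebNode K κ) ↑sI := node_injOn K κ hK hκ
  have hvpos : ∀ i, 0 < chebNode K κ i := fun i => lt_of_lt_of_le one_pos (node_ge_one K κ hκ i)
  set w : ℕ → ℝ :=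
    fun i => (∏ k ∈ sI.erase i, (chebNode K κ i - chebNode K κ k))⁻¹ with hw
  -- moment identities
  have hmom : ∀ j : ℕ, j ≤ K → ∑ i ∈ sI, w i * (chebNode K κ i) ^ j = 0 := by
    intro j hj
    have hdeg : (X ^ j : ℝ[X]).degree < sI.card := by
      rw [degree_X_pow, hcard]
      exact_mod_cast (by omega : j < K + 2)
    have hk := lagrange_key sI (chebNode K κ) hinj (X ^ j) hdeg
    simp only [eval_pow, eval_X] at hk
    rw [hk, hcard, coeff_X_pow]
    simp only [ite_eq_right_iff]
    intro h; omega
  have hS1 : ∑ i ∈ sI, w i = 0 := by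
    have := hmom 0 (by omega)
    simpa using this
  -- signs
  have hsign : ∀ i ∈ sI, 0 < (-1:ℝ)^(i-1) * w i := by
    intro i hi
    have hws := weight_sign K κ hK hκ hi
    have h1 : (0:ℝ) < ((-1:ℝ)^(i-1) * ∏ k ∈ sI.erase i, (chebNode K κ i - chebNode K κ k))⁻¹ :=
      inv_pos.mpr hws
    have h2 : ((-1:ℝ)^(i-1))⁻¹ = (-1:ℝ)^(i-1) := by
      rw [← inv_pow, inv_neg, inv_one]
    rwa [mul_inv, h2] at h1
  have habs : ∀ i ∈ sI, |w i| = (-1:ℝ)^(i-1) * w i := by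
    intro i hi
    calc |w i| = |(-1:ℝ)^(i-1) * w i| := by
          rw [abs_mul, abs_pow, abs_neg, abs_one, one_pow, one_mul]
      _ = (-1:ℝ)^(i-1) * w i := abs_of_pos (hsign i hi)
  -- the Chebyshev sum
  set Lc : ℝ := 2^K * (2/(κ-1))^(K+1) with hLc
  have hLcpos : 0 < Lc := by positivity
  have hTsum : ∑ i ∈ sI, w i * (-1:ℝ)^(i-1) = Lc := by
    set p : ℝ[X] := (Chebyshev.T ℝ ((K:ℤ)+1)).comp
      (C (2/(κ-1)) * X + C (-((κ+1)/(κ-1)))) with hp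
    have hTd := (cheb_coeffs K).1
    have hTnd : (Chebyshev.T ℝ ((K:ℤ)+1)).natDegree = K+1 :=
      le_antisymm hTd.1 (le_natDegree_of_ne_zero (by rw [hTd.2]; positivity))
    have hne : (2:ℝ)/(κ-1) ≠ 0 := by positivity
    have hlin_nd : (C ((2:ℝ)/(κ-1)) * X + C (-((κ+1)/(κ-1)))).natDegree = 1 :=
      natDegree_linear hne
    have hpnd : p.natDegree = K+1 := by
      rw [hp, natDegree_comp, hTnd, hlin_nd, mul_one]
    have hplc : p.coeff (K+1) = Lc := by
      rw [show K+1 = p.natDegree from hpnd.symm, coeff_natDegree, hp,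
        leadingCoeff_comp (by rw [hlin_nd]; omega), leadingCoeff_linear hne, hTnd]
      unfold leadingCoeff
      rw [hTnd, hTd.2, hLc]
    have hpdeg : p.degree < sI.card := by
      refine lt_of_le_of_lt degree_le_natDegree ?_
      rw [hpnd, hcard]
      exact_mod_cast (by omega : K + 1 < K + 2)
    have hk := lagrange_key sI (chebNode K κ) hinj p hpdeg
    have heval : ∀ i ∈ sI, p.eval (chebNode K κ i) = (-1:ℝ)^(i-1) := by
      intro i hi
      have hi1 : 1 ≤ i := (Finset.mem_Icc.mp hi).1
      rw [hp, eval_comp]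
      simp only [eval_add, eval_mul, eval_C, eval_X]
      have harg : 2/(κ-1) * chebNode K κ i + (-((κ+1)/(κ-1)))
          = Real.cos (((i:ℝ) - 1) * Real.pi / ((K:ℝ) + 1)) := by
        unfold chebNode
        field_simp
        ring
      rw [harg, Polynomial.Chebyshev.T_real_cos]
      have harg2 : (((K:ℤ)+1 : ℤ):ℝ) * (((i:ℝ) - 1) * Real.pi / ((K:ℝ) + 1))
          = ((i - 1 : ℕ):ℝ) * Real.pi := by
        push_cast [Nat.cast_sub hi1]
        field_simp
      rw [harg2]
      have := Real.cos_add_nat_mul_pi 0 (i-1)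
      simpa using this
    rw [Finset.sum_congr rfl (fun i hi => by rw [heval i hi])] at hk
    rw [hk, hcard]
    exact hplc
  have hAbsSum : ∑ i ∈ sI, |w i| = Lc := by
    rw [Finset.sum_congr rfl habs, ← hTsum]
    exact Finset.sum_congr rfl (fun i _ => mul_comm _ _)
  -- the inverse sum
  have hprodpos : 0 < ∏ i ∈ sI, chebNode K κ i := Finset.prod_pos (fun i _ => hvpos i)
  have hinv : ∑ i ∈ sI, w i * (chebNode K κ i)⁻¹
      = -(((-1:ℝ)^(K+2) * ∏ i ∈ sI, chebNode K κ i)⁻¹) := by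
    set s' : Finset ℕ := Finset.Icc 0 (K+2) with hs'
    set v' : ℕ → ℝ := fun k => if k = 0 then 0 else chebNode K κ k with hv'
    have h0notin : (0:ℕ) ∉ sI := by rw [hsI]; simp
    have e0 : s' = insert 0 sI := by
      rw [hs', hsI]; ext k; simp only [Finset.mem_insert, Finset.mem_Icc]; omega
    have hs'card : s'.card = K+3 := by rw [hs', Nat.card_Icc]; omega
    have hinj' : Set.InjOn v' ↑s' := by
      intro a ha b hb hab
      by_cases ha0 : a = 0 <;> by_cases hb0 : b = 0
      · rw [ha0, hb0]
      · exfalso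
        rw [hv'] at hab
        simp only [ha0, if_pos, if_neg hb0] at hab
        exact absurd hab.symm (hvpos b).ne'
      · exfalso
        rw [hv'] at hab
        simp only [hb0, if_pos, if_neg ha0] at hab
        exact absurd hab (hvpos a).ne'
      · have ha' : a ∈ (↑sI : Set ℕ) := by
          simp only [hs', Finset.coe_Icc, Set.mem_Icc] at ha
          simp only [hsI, Finset.coe_Icc, Set.mem_Icc]; omega
        have hb' : b ∈ (↑sI : Set ℕ) := by
          simp only [hs', Finset.coe_Icc, Set.mem_Icc] at hb
          simp only [hsI, Finset.coe_Icc, Set.mem_Icc]; omega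
        apply hinj ha' hb'
        rw [hv'] at hab
        simpa only [if_neg ha0, if_neg hb0] using hab
    have hdeg1 : (1 : ℝ[X]).degree < s'.card := by
      rw [degree_one, hs'card]
      exact_mod_cast (by omega : 0 < K + 3)
    have hkey := lagrange_key s' v' hinj' 1 hdeg1
    have hco : (1 : ℝ[X]).coeff (s'.card - 1) = 0 := by
      rw [hs'card]
      simp [coeff_one]
    rw [hco] at hkey
    rw [e0, Finset.sum_insert h0notin] at hkey
    simp only [eval_one, mul_one] at hkey
    have hT0 : (∏ k ∈ (insert 0 sI).erase 0, (v' 0 - v' k))⁻¹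
        = ((-1:ℝ)^(K+2) * ∏ i ∈ sI, chebNode K κ i)⁻¹ := by
      rw [Finset.erase_insert h0notin]
      congr 1
      calc ∏ k ∈ sI, (v' 0 - v' k)
          = ∏ k ∈ sI, ((-1) * chebNode K κ k) := by
            apply Finset.prod_congr rfl
            intro k hk
            have hk0 : k ≠ 0 := fun h => h0notin (h ▸ hk)
            rw [hv']
            simp only [if_pos, if_neg hk0]
            ring
        _ = (∏ _k ∈ sI, (-1:ℝ)) * ∏ k ∈ sI, chebNode K κ k := Finset.prod_mul_distrib
        _ = (-1:ℝ)^(K+2) * ∏ i ∈ sI, chebNode K κ i := by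
            rw [Finset.prod_const, hcard]
    have hterm : ∀ i ∈ sI, (∏ k ∈ (insert 0 sI).erase i, (v' i - v' k))⁻¹
        = (chebNode K κ i)⁻¹ * w i := by
      intro i hi
      have hi0 : i ≠ 0 := fun h => h0notin (h ▸ hi)
      rw [Finset.erase_insert_of_ne (Ne.symm hi0)]
      rw [Finset.prod_insert (fun h => h0notin (Finset.erase_subset _ _ h))]
      have hval : v' i - v' 0 = chebNode K κ i := by
        rw [hv']; simp only [if_pos, if_neg hi0]; ring
      have hrest : ∏ k ∈ sI.erase i, (v' i - v' k)
          = ∏ k ∈ sI.erase i, (chebNode K κ i - chebNode K κ k) := by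
        apply Finset.prod_congr rfl
        intro k hk
        have hk0 : k ≠ 0 := fun h => h0notin (h ▸ (Finset.mem_of_mem_erase hk))
        rw [hv']; simp only [if_neg hi0, if_neg hk0]
      rw [hval, hrest, mul_inv, hw]
    rw [Finset.sum_congr rfl hterm, hT0] at hkey
    have : ∑ i ∈ sI, w i * (chebNode K κ i)⁻¹
        = ∑ i ∈ sI, (chebNode K κ i)⁻¹ * w i :=
      Finset.sum_congr rfl (fun i _ => mul_comm _ _)
    rw [this]
    linarith
  -- assembly
  set ε : ℝ := (-1:ℝ)^(K+1) with hε
  set c : ℝ := 2*d/Lc with hc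
  have hcpos : 0 < c := by positivity
  have hmax_sub : ∀ a : ℝ, max a 0 - max (-a) 0 = a := by
    intro a
    rcases le_total a 0 with h | h
    · rw [max_eq_right h, max_eq_left (by linarith : (0:ℝ) ≤ -a)]; ring
    · rw [max_eq_left h, max_eq_right (by linarith : -a ≤ (0:ℝ))]; ring
  have hmax_abs : ∀ a : ℝ, max a 0 + max (-a) 0 = |a| := by
    intro a
    rcases le_total a 0 with h | h
    · rw [max_eq_right h, max_eq_left (by linarith : (0:ℝ) ≤ -a), abs_of_nonpos h]; ring
    · rw [max_eq_left h, max_eq_right (by linarith : -a ≤ (0:ℝ)), abs_of_nonneg h]; ring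
  have habsε : ∀ i, |ε * w i| = |w i| := by
    intro i
    rw [abs_mul, hε, abs_pow, abs_neg, abs_one, one_pow, one_mul]
  refine ⟨fun i => c * max (ε * w i) 0, fun i => c * max (-(ε * w i)) 0, ?_, ?_, ?_, ?_, ?_⟩
  · intro i _
    constructor <;> positivity
  · intro j hj
    rw [← sub_eq_zero, ← Finset.sum_sub_distrib]
    have hpt : ∀ i ∈ sI, c * max (ε * w i) 0 * chebNode K κ i ^ j
        - c * max (-(ε * w i)) 0 * chebNode K κ i ^ j
        = (c * ε) * (w i * chebNode K κ i ^ j) := by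
      intro i _
      have h1 := hmax_sub (ε * w i)
      linear_combination (c * chebNode K κ i ^ j) * h1
    rw [Finset.sum_congr rfl hpt, ← Finset.mul_sum, hmom j hj, mul_zero]
  · rw [← Finset.mul_sum]
    have hsm : ∑ i ∈ sI, max (ε * w i) 0 = Lc/2 := by
      have hpt : ∀ i ∈ sI, max (ε * w i) 0 = (|w i| + ε * w i)/2 := by
        intro i hi
        have h1 := hmax_sub (ε * w i)
        have h2 := hmax_abs (ε * w i)
        have h3 := habsε i
        linarith
      rw [Finset.sum_congr rfl hpt]
      rw [← Finset.sum_div, Finset.sum_add_distrib, hAbsSum, ← Finset.mul_sum, hS1, mul_zero,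
        add_zero]
    rw [hsm, hc]
    field_simp
  · rw [← Finset.mul_sum]
    have hsm : ∑ i ∈ sI, max (-(ε * w i)) 0 = Lc/2 := by
      have hpt : ∀ i ∈ sI, max (-(ε * w i)) 0 = (|w i| - ε * w i)/2 := by
        intro i hi
        have h1 := hmax_sub (ε * w i)
        have h2 := hmax_abs (ε * w i)
        have h3 := habsε i
        linarith
      rw [Finset.sum_congr rfl hpt]
      rw [← Finset.sum_div, Finset.sum_sub_distrib, hAbsSum, ← Finset.mul_sum, hS1, mul_zero,
        sub_zero]
    rw [hsm, hc]
    field_simp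
  · -- the main inequality
    have hdiffsum : (∑ i ∈ sI, (c * max (ε * w i) 0) / chebNode K κ i)
        - ∑ i ∈ sI, (c * max (-(ε * w i)) 0) / chebNode K κ i
        = (c * ε) * ∑ i ∈ sI, w i * (chebNode K κ i)⁻¹ := by
      rw [← Finset.sum_sub_distrib, Finset.mul_sum]
      apply Finset.sum_congr rfl
      intro i _
      have h1 := hmax_sub (ε * w i)
      rw [div_eq_mul_inv, div_eq_mul_inv]
      linear_combination (c * (chebNode K κ i)⁻¹) * h1
    rw [hdiffsum, hinv]
    have hee : (c * ε) * (-(((-1:ℝ)^(K+2) * ∏ i ∈ sI, chebNode K κ i)⁻¹))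
        = c * (∏ i ∈ sI, chebNode K κ i)⁻¹ := by
      rw [mul_inv, hε]
      have hodd : (-1:ℝ)^(K+1) * (-1:ℝ)^(K+2) = -1 := by
        rw [← pow_add]
        exact Odd.neg_one_pow ⟨K+1, by ring⟩
      have hinvpow : ((-1:ℝ)^(K+2))⁻¹ = (-1:ℝ)^(K+2) := by
        rw [← inv_pow, inv_neg, inv_one]
      rw [hinvpow]
      linear_combination (-(c * (∏ i ∈ sI, chebNode K κ i)⁻¹)) * hodd
    rw [hee]
    have hc2 : c * (∏ i ∈ sI, chebNode K κ i)⁻¹ = 2*d / (Lc * ∏ i ∈ sI, chebNode K κ i) := by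
      rw [hc]
      field_simp
    rw [hc2]
    have hbound := prod_bound K κ hK hκ
    have htpos : (0:ℝ) < chebX0 κ + Real.sqrt ((chebX0 κ)^2 - 1) := by
      have h1 : (0:ℝ) < 2/(κ-1) := by positivity
      have h2 := Real.sqrt_nonneg ((chebX0 κ)^2 - 1)
      unfold chebX0
      unfold chebX0 at h2
      linarith
    gcongr
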